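/- arXiv:2412.19444 — 2 statements merged into one kernel-verified Lean document; each statement's English description precedes it below -/
import Mathlib

section
/- Suppose 0 < a_0 ≤ a_1 ≤ ... ≤ a_T. Then max over t ≤ T of ∑_{τ<t} a_τ/a_t is at least (1/e)·(T / log₊(a_T/a_0) − 1), where log₊(x) = max(1, log x). -/
/-!
Let `S t = ∑_{τ<t} a τ` and let `M` be the maximal ratio `S t / a t`. Then
`S (t+1) = S t + a t ≥ (1 + 1/M) S t`, so the partial sums grow geometrically from any
starting index `m`, while `m a₀ ≤ S m` and `S T ≤ M a_T`. Taking logarithms and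
`log (1 + 1/M) ≥ 1/(M+1)` gives `(T - m)/(M+1) ≤ log (a_T/a₀) + log (M/m)`; the choice
`m = 1` handles small `M` and `m = ⌈M⌉` handles large `M`.
-/

open Finset Real

lemma sum_range_mul_one_add_inv_pow_le {a : ℕ → ℝ} {M : ℝ} (hM : 0 < M) {m n : ℕ}
    (hmn : m ≤ n) (h : ∀ t, m ≤ t → t < n → ∑ τ ∈ range t, a τ ≤ M * a t) :
    (∑ τ ∈ range m, a τ) * (1 + M⁻¹) ^ (n - m) ≤ ∑ τ ∈ range n, a τ := by
  induction n, hmn using Nat.le_induction with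
  | base => simp
  | succ n hmn ih =>
    have hstep : (∑ τ ∈ range n, a τ) * M⁻¹ ≤ a n := by
      rw [← div_eq_mul_inv, div_le_iff₀ hM, mul_comm]
      exact h n hmn n.lt_succ_self
    calc (∑ τ ∈ range m, a τ) * (1 + M⁻¹) ^ (n + 1 - m)
        = (∑ τ ∈ range m, a τ) * (1 + M⁻¹) ^ (n - m) * (1 + M⁻¹) := by
          rw [Nat.sub_add_comm hmn, pow_succ, mul_assoc]
      _ ≤ (∑ τ ∈ range n, a τ) * (1 + M⁻¹) := by
          gcongr
          exact ih fun t ht htn => h t ht (htn.trans n.lt_succ_self)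
      _ ≤ ∑ τ ∈ range (n + 1), a τ := by
          rw [sum_range_succ]
          linarith

lemma inv_add_one_le_log_one_add_inv {M : ℝ} (hM : 0 < M) : (M + 1)⁻¹ ≤ log (1 + M⁻¹) := by
  have h := one_sub_inv_le_log_of_pos (x := 1 + M⁻¹) (by positivity)
  have hval : 1 - (1 + M⁻¹)⁻¹ = (M + 1)⁻¹ := by field_simp; ring
  rwa [hval] at h

lemma sub_div_le_log_div_add_log_div {a : ℕ → ℝ} {T m : ℕ} {M : ℝ} (hpos : 0 < a 0)
    (ha : ∀ τ ≤ T, a 0 ≤ a τ) (hM : 0 < M)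
    (hS : ∀ t, 1 ≤ t → t ≤ T → ∑ τ ∈ range t, a τ ≤ M * a t) (hm : 1 ≤ m) (hmT : m ≤ T) :
    ((T : ℝ) - m) / (M + 1) ≤ log (a T / a 0) + log (M / m) := by
  have hm0 : (0 : ℝ) < m := by exact_mod_cast hm
  have haT : 0 < a T := hpos.trans_le (ha T le_rfl)
  have hSm : m * a 0 ≤ ∑ τ ∈ range m, a τ := by
    simpa using card_nsmul_le_sum (range m) a (a 0)
      fun τ hτ => ha τ ((mem_range.mp hτ).le.trans hmT)
  have hgrowth : m * a 0 * (1 + M⁻¹) ^ (T - m) ≤ M * a T :=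
    calc m * a 0 * (1 + M⁻¹) ^ (T - m) ≤ (∑ τ ∈ range m, a τ) * (1 + M⁻¹) ^ (T - m) := by
          gcongr
      _ ≤ ∑ τ ∈ range T, a τ :=
          sum_range_mul_one_add_inv_pow_le hM hmT fun t ht htT => hS t (hm.trans ht) htT.le
      _ ≤ M * a T := hS T (hm.trans hmT) le_rfl
  have hpow : (1 + M⁻¹) ^ (T - m) ≤ a T / a 0 * (M / m) := by
    rw [div_mul_div_comm, le_div_iff₀ (by positivity)]
    linarith
  have hlog := log_le_log (by positivity) hpow
  rw [log_pow, log_mul (by positivity) (by positivity), Nat.cast_sub hmT] at hlog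
  calc ((T : ℝ) - m) / (M + 1) = ((T : ℝ) - m) * (M + 1)⁻¹ := div_eq_mul_inv _ _
    _ ≤ ((T : ℝ) - m) * log (1 + M⁻¹) := by
        gcongr
        · exact sub_nonneg.mpr (by exact_mod_cast hmT)
        · exact inv_add_one_le_log_one_add_inv hM
    _ ≤ _ := hlog

lemma natCast_le_mul_exp_one_mul_add_one {T : ℕ} {M L : ℝ} (hM : 0 < M) (hL : 1 ≤ L)
    (h : ∀ m : ℕ, 1 ≤ m → m ≤ T → ((T : ℝ) - m) / (M + 1) ≤ L + log (M / m)) :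
    (T : ℝ) ≤ L * (exp 1 * M + 1) := by
  have he : 2.7 < exp 1 := lt_trans (by norm_num) exp_one_gt_d9
  by_cases hT : (T : ℝ) ≤ exp 1 * M + 1
  · nlinarith
  push Not at hT
  rcases le_or_gt M (3 / 2) with hMs | hMl
  · have hone := h 1 le_rfl (by exact_mod_cast (by nlinarith : (1 : ℝ) ≤ T))
    rw [Nat.cast_one, div_one, div_le_iff₀ (by positivity)] at hone
    have hlogM := log_le_sub_one_of_pos hM
    -- `T - 1 ≤ (L + M - 1)(M + 1)`, i.e. `T ≤ L(M + 1) + M²`, and `M² ≤ (e - 1) M L`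
    nlinarith [mul_le_mul_of_nonneg_right hlogM hM.le, mul_le_mul_of_nonneg_left hL hM.le]
  · have hceil := Nat.ceil_lt_add_one hM.le
    have hle := Nat.le_ceil M
    have hm : 1 ≤ ⌈M⌉₊ := Nat.one_le_iff_ne_zero.mpr (Nat.ceil_pos.mpr hM).ne'
    have hmT : ⌈M⌉₊ ≤ T := by exact_mod_cast (by nlinarith : (⌈M⌉₊ : ℝ) ≤ T)
    have hceilM := h _ hm hmT
    have hlog : log (M / ⌈M⌉₊) ≤ 0 :=
      log_nonpos (by positivity) ((div_le_one (by positivity)).mpr hle)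
    rw [div_le_iff₀ (by positivity)] at hceilM
    -- `T ≤ L(M + 1) + (M + 1)` and `M + 1 ≤ (e - 1) M ≤ (e - 1) M L`
    have hX : M + 1 ≤ (exp 1 - 1) * M := by nlinarith
    nlinarith [mul_le_mul_of_nonneg_right hlog (by positivity : (0 : ℝ) ≤ M + 1),
      mul_le_mul_of_nonneg_right hL (by linarith : (0 : ℝ) ≤ (exp 1 - 1) * M)]

theorem stmt_3 (T : ℕ) (a : ℕ → ℝ) (hpos : 0 < a 0)
    (hmono : ∀ k, 1 ≤ k → k ≤ T → a (k - 1) ≤ a k) :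
    ∃ t ≤ T,
      (1 / Real.exp 1) * ((T : ℝ) / max 1 (Real.log (a T / a 0)) - 1)
        ≤ ∑ τ ∈ Finset.range t, a τ / a t := by
  have ha : ∀ τ ≤ T, a 0 ≤ a τ := by
    intro τ hτ
    induction τ with
    | zero => exact le_rfl
    | succ τ ih => exact (ih (by omega)).trans (by simpa using hmono (τ + 1) (by omega) hτ)
  obtain ⟨t, ht, hmax⟩ := exists_max_image (range (T + 1))
    (fun t => ∑ τ ∈ range t, a τ / a t) ⟨0, by simp⟩
  refine ⟨t, Nat.lt_succ_iff.mp (mem_range.mp ht), ?_⟩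
  set M := ∑ τ ∈ range t, a τ / a t
  set L := max 1 (log (a T / a 0))
  have hL : 1 ≤ L := le_max_left _ _
  have hS : ∀ s, 1 ≤ s → s ≤ T → ∑ τ ∈ range s, a τ ≤ M * a s := fun s _ hsT => by
    have := hmax s (mem_range.mpr (Nat.lt_succ_of_le hsT))
    rwa [← sum_div, div_le_iff₀ (hpos.trans_le (ha s hsT))] at this
  suffices hT : (T : ℝ) ≤ L * (exp 1 * M + 1) by
    rw [one_div_mul_eq_div, div_le_iff₀ (exp_pos 1), sub_le_iff_le_add, div_le_iff₀ (by positivity)]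
    linarith
  rcases Nat.eq_zero_or_pos T with rfl | hT
  · have hM : 0 ≤ M := by simpa using hmax 0 (by simp)
    simp only [Nat.cast_zero]
    positivity
  have hM : 0 < M := by
    have := hS 1 le_rfl hT
    simp only [range_one, sum_singleton] at this
    nlinarith [ha 1 hT]
  exact natCast_le_mul_exp_one_mul_add_one hM hL fun m hm hmT =>
    (sub_div_le_log_div_add_log_div hpos ha hM hS hm hmT).trans
      (by gcongr; exact le_max_right _ _)
end

section
/- For β₁ ∈ (0,1), nonnegative reals g_0,...,g_{t-1} with positive partial sums of squares, the double sum ∑_{k=0}^{t-1} (∑_{j=0}^k β₁^{k-j} g_j²)/√(∑_{s=0}^k g_s²) is at most (2/(1−β₁)) · √(∑_{s=0}^{t-1} g_s²). -/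
/-!
Bounding each denominator `√(∑_{s≤k} g_s²)` from below by `√(∑_{s≤j} g_s²)` for `j ≤ k` and
exchanging the order of summation reduces the double sum to `(1 - β₁)⁻¹ ∑_j g_j² / √(∑_{s≤j} g_s²)`,
since the geometric weights `β₁ ^ (k - j)` over `k ≥ j` add up to at most `(1 - β₁)⁻¹`. The last sum
telescopes: `(y - x) / √y ≤ 2 (√y - √x)` for `0 ≤ x ≤ y` is `(√y - √x)² ≥ 0`.
-/

open Finset

lemma sub_div_sqrt_le_two_mul_sqrt_sub {x y : ℝ} (hx : 0 ≤ x) (hxy : x ≤ y) :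
    (y - x) / √y ≤ 2 * (√y - √x) := by
  rcases (hx.trans hxy).eq_or_lt with hy | hy
  · simp [← hy, show x = 0 by linarith]
  have hsy : 0 < √y := Real.sqrt_pos.mpr hy
  rw [div_le_iff₀ hsy]
  nlinarith [Real.sq_sqrt hx, Real.sq_sqrt hy.le, sq_nonneg (√y - √x)]

lemma sum_div_sqrt_partial_sum_le {a : ℕ → ℝ} (ha : ∀ n, 0 ≤ a n) (n : ℕ) :
    ∑ j ∈ range n, a j / √(∑ s ∈ range (j + 1), a s) ≤ 2 * √(∑ s ∈ range n, a s) := by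
  induction n with
  | zero => simp
  | succ n ih =>
    have hstep := sub_div_sqrt_le_two_mul_sqrt_sub (sum_nonneg fun s _ ↦ ha s)
      (sum_le_sum_of_subset_of_nonneg (range_subset_range.mpr n.le_succ) fun s _ _ ↦ ha s)
    rw [sum_range_succ_sub_sum] at hstep
    rw [sum_range_succ]
    linarith

lemma div_sqrt_le_div_sqrt {a x y : ℝ} (ha : 0 ≤ a) (hax : a ≤ x) (hxy : x ≤ y) :
    a / √y ≤ a / √x := by
  rcases ha.eq_or_lt with rfl | ha
  · simp
  exact div_le_div_of_nonneg_left ha.le (Real.sqrt_pos.mpr (ha.trans_le hax))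
    (Real.sqrt_le_sqrt hxy)

lemma geom_sum_Ico_pow_sub_le {β : ℝ} (hβ : 0 ≤ β) (hβ' : β < 1) (j t : ℕ) :
    ∑ k ∈ Ico j t, β ^ (k - j) ≤ 1 / (1 - β) := by
  rw [sum_Ico_eq_sum_range]
  simp only [Nat.add_sub_cancel_left]
  have hgeom := geom_sum_Ico_le_of_lt_one (m := 0) (n := t - j) hβ hβ'
  rwa [← range_eq_Ico, pow_zero] at hgeom

lemma sum_range_sum_pow_sub_mul_le {β : ℝ} (hβ : 0 ≤ β) (hβ' : β < 1) {b : ℕ → ℝ}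
    (hb : ∀ j, 0 ≤ b j) (t : ℕ) :
    ∑ k ∈ range t, ∑ j ∈ range (k + 1), β ^ (k - j) * b j ≤ 1 / (1 - β) * ∑ j ∈ range t, b j := by
  have hswap := sum_Ico_Ico_comm 0 t fun j k ↦ β ^ (k - j) * b j
  simp only [Nat.Ico_zero_eq_range] at hswap
  rw [← hswap, mul_sum]
  refine sum_le_sum fun j _ ↦ ?_
  rw [← sum_mul]
  exact mul_le_mul_of_nonneg_right (geom_sum_Ico_pow_sub_le hβ hβ' j t) (hb j)

theorem stmt_7_general (β₁ : ℝ) (hβ₁ : 0 < β₁) (hβ₁' : β₁ < 1) (t : ℕ) (g : ℕ → ℝ) :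
    ∑ k ∈ Finset.range t,
        (∑ j ∈ Finset.range (k + 1), β₁ ^ (k - j) * (g j) ^ 2) /
          Real.sqrt (∑ s ∈ Finset.range (k + 1), (g s) ^ 2)
      ≤ (2 / (1 - β₁)) * Real.sqrt (∑ s ∈ Finset.range t, (g s) ^ 2) := by
  set S : ℕ → ℝ := fun k ↦ ∑ s ∈ range (k + 1), g s ^ 2
  have hS_mono : Monotone S := fun j k hjk ↦
    sum_le_sum_of_subset_of_nonneg (range_subset_range.mpr (by omega)) fun s _ _ ↦ sq_nonneg _
  have hsq_le_S (j : ℕ) : g j ^ 2 ≤ S j :=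
    single_le_sum (f := fun s ↦ g s ^ 2) (fun s _ ↦ sq_nonneg _) (self_mem_range_succ j)
  calc ∑ k ∈ range t, (∑ j ∈ range (k + 1), β₁ ^ (k - j) * g j ^ 2) / √(S k)
      = ∑ k ∈ range t, ∑ j ∈ range (k + 1), β₁ ^ (k - j) * (g j ^ 2 / √(S k)) := by
        simp only [sum_div, mul_div_assoc]
    _ ≤ ∑ k ∈ range t, ∑ j ∈ range (k + 1), β₁ ^ (k - j) * (g j ^ 2 / √(S j)) := by
        refine sum_le_sum fun k _ ↦ sum_le_sum fun j hj ↦ ?_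
        refine mul_le_mul_of_nonneg_left ?_ (pow_nonneg hβ₁.le _)
        exact div_sqrt_le_div_sqrt (sq_nonneg _) (hsq_le_S j)
          (hS_mono (Nat.lt_succ_iff.mp (mem_range.mp hj)))
    _ ≤ 1 / (1 - β₁) * ∑ j ∈ range t, g j ^ 2 / √(S j) :=
        sum_range_sum_pow_sub_mul_le hβ₁.le hβ₁' (fun j ↦ by positivity) t
    _ ≤ 1 / (1 - β₁) * (2 * √(∑ s ∈ range t, g s ^ 2)) :=
        mul_le_mul_of_nonneg_left (sum_div_sqrt_partial_sum_le (fun s ↦ sq_nonneg (g s)) t)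
          (one_div_nonneg.mpr (sub_nonneg.mpr hβ₁'.le))
    _ = 2 / (1 - β₁) * √(∑ s ∈ range t, g s ^ 2) := by ring

theorem stmt_7 (β₁ : ℝ) (hβ₁ : 0 < β₁) (hβ₁' : β₁ < 1) (t : ℕ) (g : ℕ → ℝ)
    (hnn : ∀ k < t, 0 ≤ g k)
    (hpos : ∀ k < t, 0 < ∑ s ∈ Finset.range (k + 1), (g s) ^ 2) :
    ∑ k ∈ Finset.range t,
        (∑ j ∈ Finset.range (k + 1), β₁ ^ (k - j) * (g j) ^ 2) /
          Real.sqrt (∑ s ∈ Finset.range (k + 1), (g s) ^ 2)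
      ≤ (2 / (1 - β₁)) * Real.sqrt (∑ s ∈ Finset.range t, (g s) ^ 2) :=
  stmt_7_general β₁ hβ₁ hβ₁' t g
end
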